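/- Let Π be a ground classical disjunctive logic program with classical aggregates (a DLP^A program) and let Π′ = ⟨R, τ⟩ be its DHPP₁^PA translation, in which every atom and every aggregate atom is annotated with [1,1] and every conjunct of every symbolic set is annotated with [1,1], with τ an arbitrary assignment of disjunctive p-strategies. Assume every c_ρ composes any multiset of copies of [1,1] to [1,1]. For I ⊆ B_L, let h_I be the p-interpretation with h_I(a) = [1,1] if a ∈ I, h_I(a) = [0,0] if a ∈ B_L \ I, and h_I(A) = c_ρ{{h_I(a₁),…,h_I(a_n)}} for every compound hybrid basic formula A = a₁ *_ρ … *_ρ a_n. Then h_I is a probability answer set of Π′ if and only if I is a classical (Faber–Leone–Pfeifer) answer set of Π. -/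
import Mathlib


open scoped Classical

noncomputable section

/-- `C[0,1]`: closed subintervals `[lo, hi]` of `[0,1]`, encoded as pairs of reals. -/
def PInterval : Type := {p : ℝ × ℝ // 0 ≤ p.1 ∧ p.1 ≤ p.2 ∧ p.2 ≤ 1}

/-- The truth order on raw pairs of reals (componentwise `≤`). -/
def tleP (x y : ℝ × ℝ) : Prop := x.1 ≤ y.1 ∧ x.2 ≤ y.2

/-- The truth order `≤_t` on `C[0,1]`:
`[α₁,β₁] ≤_t [α₂,β₂]` iff `α₁ ≤ α₂` and `β₁ ≤ β₂`. -/
def tle (x y : PInterval) : Prop := tleP x.val y.val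

/-- The interval `[0,0]`. -/
def zeroI : PInterval := ⟨(0, 0), by norm_num⟩

/-- The interval `[1,1]`. -/
def oneI : PInterval := ⟨(1, 1), by norm_num⟩

/-- A p-strategy: a probability composition function `c_ρ` on `C[0,1]`, commutative,
associative and monotone w.r.t. `≤_t` in each argument, together with its extension
to finite multisets of intervals by iterated application. -/
structure PStrategy where
  comp : PInterval → PInterval → PInterval
  compM : Multiset PInterval → PInterval
  comp_comm : ∀ x y, comp x y = comp y x
  comp_assoc : ∀ x y z, comp (comp x y) z = comp x (comp y z)
  comp_mono : ∀ x x' y y', tle x x' → tle y y' → tle (comp x y) (comp x' y')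
  compM_singleton : ∀ x, compM {x} = x
  compM_cons : ∀ x (s : Multiset PInterval), s ≠ 0 → compM (x ::ₘ s) = comp x (compM s)

/-- A signature of p-strategies: a family of p-strategies indexed by `Strat`, with a
designated class of disjunctive p-strategies, each of which composes the empty
multiset to `[0,0]`. -/
structure PSig (Strat : Type) where
  str : Strat → PStrategy
  IsDisj : Strat → Prop
  disj_empty : ∀ ρ, IsDisj ρ → (str ρ).compM 0 = zeroI

/-- Ground hybrid basic formulae over atoms from `Atom` and p-strategies from `Strat`:
atoms `a`, conjunctions `a₁ ∧_ρ … ∧_ρ aₙ`, and disjunctions `a₁ ∨_ρ … ∨_ρ aₙ`. -/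
inductive HBF (Atom Strat : Type) where
  | atom (a : Atom)
  | conj (ρ : Strat) (atoms : List Atom)
  | disj (ρ : Strat) (atoms : List Atom)

/-- A probability interpretation (p-interpretation): a mapping
`h : bf_S(B_L) → C[0,1]`. -/
abbrev PInterp (Atom Strat : Type) := HBF Atom Strat → PInterval

variable {Atom Strat : Type}

/-- Pointwise extension of `≤_t` to p-interpretations. -/
def interpLE (h₁ h₂ : PInterp Atom Strat) : Prop := ∀ A, tle (h₁ A) (h₂ A)

/-- Strict pointwise order on p-interpretations. -/
def interpLT (h₁ h₂ : PInterp Atom Strat) : Prop := interpLE h₁ h₂ ∧ h₁ ≠ h₂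

/-- Comparison operators `≺ ∈ {=, ≠, <, >, ≤, ≥}`. -/
inductive CmpOp | eq | ne | lt | gt | le | ge

/-- Evaluation of a comparison operator on reals. -/
def CmpOp.evalR : CmpOp → ℝ → ℝ → Prop
  | .eq, x, y => x = y
  | .ne, x, y => x ≠ y
  | .lt, x, y => x < y
  | .gt, x, y => x > y
  | .le, x, y => x ≤ y
  | .ge, x, y => x ≥ y

/-- Comparison of an interval-valued aggregate result with an interval guard
`T = [θ₁,θ₂]` (componentwise). -/
def CmpOp.evalI (op : CmpOp) (x T : ℝ × ℝ) : Prop := op.evalR x.1 T.1 ∧ op.evalR x.2 T.2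

/-- Comparison of a scalar aggregate value with an interval guard `T = [θ₁,θ₂]`. -/
def CmpOp.evalG (op : CmpOp) (x : ℝ) (T : ℝ × ℝ) : Prop := op.evalR x T.1 ∧ op.evalR x T.2

/-- Minimum of a list of reals (undefined, i.e. `none`, on the empty list). -/
def listMin : List ℝ → Option ℝ
  | [] => none
  | x :: xs => some (xs.foldl min x)

/-- Maximum of a list of reals (undefined, i.e. `none`, on the empty list). -/
def listMax : List ℝ → Option ℝ
  | [] => none
  | x :: xs => some (xs.foldl max x)

/-- Classical aggregate functions `{sum, times, min, max, count}`. -/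
inductive AggF | sum | times | min | max | count

/-- Classical aggregate on a multiset of reals; `min` and `max` are undefined on the
empty multiset, `sum ∅ = 0`, `times ∅ = 1`, `count ∅ = 0`. -/
def AggF.evalC : AggF → Multiset ℝ → Option ℝ
  | .sum, s => some s.sum
  | .times, s => some s.prod
  | .min, s => listMin s.toList
  | .max, s => listMax s.toList
  | .count, s => some (Multiset.card s)

/-- Expected-value probability aggregate functions
`{val_E, sum_E, times_E, min_E, max_E, count_E}`. -/
inductive EAggF | valE | sumE | timesE | minE | maxE | countE

/-- `X = Π_{F : [P₁,P₂] ∈ S_h} [P₁,P₂]`, the componentwise product of the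
probability annotations of the multiset. -/
def aggX (s : Multiset (ℝ × PInterval)) : ℝ × ℝ :=
  ((s.map fun e => e.2.val.1).prod, (s.map fun e => e.2.val.2).prod)

/-- Evaluation of the expected-value probability aggregates on a multiset
`S_h` of annotated values; `⊥` is represented by `none`. -/
def EAggF.evalE : EAggF → Multiset (ℝ × PInterval) → Option (ℝ × ℝ)
  | .valE, s =>
      some ((s.map fun e => e.1 * e.2.val.1).sum, (s.map fun e => e.1 * e.2.val.2).sum)
  | .sumE, s => some ((s.map Prod.fst).sum • aggX s)
  | .timesE, s => some ((s.map Prod.fst).prod • aggX s)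
  | .minE, s => (listMin (s.map Prod.fst).toList).map (· • aggX s)
  | .maxE, s => (listMax (s.map Prod.fst).toList).map (· • aggX s)
  | .countE, s => some ((Multiset.card s : ℝ) • aggX s)

/-- Evaluation of the probability-value aggregates `{sum_P, times_P, min_P, max_P,
count_P}` on a multiset `S_h`: the pair (classical aggregate of the values, `X`). -/
def AggF.evalP (f : AggF) (s : Multiset (ℝ × PInterval)) : Option (ℝ × (ℝ × ℝ)) :=
  (f.evalC (s.map Prod.fst)).map fun x => (x, aggX s)

/-- An element `⟨F : [P₁,P₂] | C⟩` of a ground probability set: a real constant `F`,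
a probability annotation and a finite conjunction of probability annotated hybrid
basic formulae. -/
structure PSetElem (Atom Strat : Type) where
  F : ℝ
  ann : PInterval
  C : List (HBF Atom Strat × PInterval)

/-- `h` satisfies a conjunction of probability annotated hybrid basic formulae. -/
def satC (h : PInterp Atom Strat) (C : List (HBF Atom Strat × PInterval)) : Prop :=
  ∀ p ∈ C, tle p.2 (h p.1)

/-- The multiset `S_h = {{F : [P₁,P₂] | ⟨F : [P₁,P₂] | C⟩ ∈ S and C is true w.r.t. h}}`. -/
def groundSet (h : PInterp Atom Strat) (S : Finset (PSetElem Atom Strat)) :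
    Multiset (ℝ × PInterval) :=
  (S.val.filter fun e => satC h e.C).map fun e => (e.F, e.ann)

/-- A body element: a ground hybrid basic formula or a ground probability aggregate
atom `f(S) ≺ T` (expected-value or probability-value kind) with interval guard `T`. -/
inductive BodyElem (Atom Strat : Type) where
  | hbf (A : HBF Atom Strat)
  | eagg (f : EAggF) (S : Finset (PSetElem Atom Strat)) (op : CmpOp) (T : ℝ × ℝ)
  | pagg (f : AggF) (S : Finset (PSetElem Atom Strat)) (op : CmpOp) (T : ℝ × ℝ)

/-- A ground DHPP^PA rule
`a₁:μ₁ ∨ … ∨ a_k:μ_k ← A_{k+1}:μ_{k+1}, …, A_m:μ_m, not A_{m+1}:μ_{m+1}, …, not A_n:μ_n`. -/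
structure Rule (Atom Strat : Type) where
  head : List (Atom × PInterval)
  pos : List (BodyElem Atom Strat × PInterval)
  neg : List (BodyElem Atom Strat × PInterval)

/-- Satisfaction of a (positive) annotated body element by `h`.  Expected-value
aggregate atoms carry the annotation `[1,1]`, i.e. their annotation is ignored. -/
def satPos (h : PInterp Atom Strat) : BodyElem Atom Strat × PInterval → Prop
  | (.hbf A, μ) => tle μ (h A)
  | (.eagg f S op T, _) => ∃ x, f.evalE (groundSet h S) = some x ∧ op.evalI x T
  | (.pagg f S op T, μ) =>
      ∃ x ν, f.evalP (groundSet h S) = some (x, ν) ∧ op.evalG x T ∧ tleP μ.val ν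

/-- Satisfaction of a negated annotated body element (`not A:μ`) by `h`. -/
def satNeg (h : PInterp Atom Strat) : BodyElem Atom Strat × PInterval → Prop
  | (.hbf A, μ) => ¬ tle μ (h A)
  | (.eagg f S op T, _) =>
      f.evalE (groundSet h S) = none ∨
        ∃ x, f.evalE (groundSet h S) = some x ∧ ¬ op.evalI x T
  | (.pagg f S op T, μ) =>
      f.evalP (groundSet h S) = none ∨
        ∃ x ν, f.evalP (groundSet h S) = some (x, ν) ∧ (¬ op.evalG x T ∨ ¬ tleP μ.val ν)

/-- `h` satisfies `body(r)`. -/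
def satBody (h : PInterp Atom Strat) (r : Rule Atom Strat) : Prop :=
  (∀ e ∈ r.pos, satPos h e) ∧ (∀ e ∈ r.neg, satNeg h e)

/-- `h` satisfies `head(r)`. -/
def satHead (h : PInterp Atom Strat) (r : Rule Atom Strat) : Prop :=
  ∃ p ∈ r.head, tle p.2 (h (HBF.atom p.1))

/-- `h` satisfies the rule `r`. -/
def satRule (h : PInterp Atom Strat) (r : Rule Atom Strat) : Prop :=
  satBody h r → satHead h r

/-- A ground DHPP^PA program `Π = ⟨R, τ⟩`. -/
structure Program (Atom Strat : Type) where
  R : Finset (Rule Atom Strat)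
  τ : Atom → Strat

/-- The multiset `{{μ : some r ∈ R has a:μ in head(r), h satisfies body(r), and
h satisfies a:μ}}`. -/
def headAnns (h : PInterp Atom Strat) (R : Finset (Rule Atom Strat)) (a : Atom) :
    Multiset PInterval :=
  R.val.bind fun r =>
    if satBody h r then
      ((↑r.head : Multiset (Atom × PInterval)).filter
          fun p => p.1 = a ∧ tle p.2 (h (HBF.atom a))).map Prod.snd
    else 0

/-- `h` is a p-model of `Π`: it satisfies every rule, and moreover (i) for every atom
`a`, `c_{τ(a)}{{μ : …}} ≤_t h(a)`, and (ii) for every compound hybrid basic formula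
`A = a₁ *_ρ … *_ρ aₙ`, `c_ρ{{h(a₁),…,h(aₙ)}} ≤_t h(A)`. -/
def isPModel (sig : PSig Strat) (P : Program Atom Strat) (h : PInterp Atom Strat) : Prop :=
  (∀ r ∈ P.R, satRule h r) ∧
  (∀ a : Atom, tle ((sig.str (P.τ a)).compM (headAnns h P.R a)) (h (HBF.atom a))) ∧
  (∀ (ρ : Strat) (l : List Atom),
    tle ((sig.str ρ).compM (↑(l.map fun a => h (HBF.atom a)))) (h (HBF.conj ρ l)) ∧
    tle ((sig.str ρ).compM (↑(l.map fun a => h (HBF.atom a)))) (h (HBF.disj ρ l)))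

/-- The probability reduct `Π^h = ⟨R^h, τ⟩`, `R^h = {r ∈ R : h satisfies body(r)}`. -/
def reduct (P : Program Atom Strat) (h : PInterp Atom Strat) : Program Atom Strat :=
  ⟨P.R.filter fun r => satBody h r, P.τ⟩

/-- `h` is a `≤_t`-minimal p-model of `Π`. -/
def isMinimalPModel (sig : PSig Strat) (P : Program Atom Strat)
    (h : PInterp Atom Strat) : Prop :=
  isPModel sig P h ∧ ∀ h', isPModel sig P h' → ¬ interpLT h' h

/-- `h` is a probability answer set of `Π` iff `h` is a `≤_t`-minimal p-model
of the probability reduct `Π^h`. -/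
def isAnswerSet (sig : PSig Strat) (P : Program Atom Strat) (h : PInterp Atom Strat) : Prop :=
  isMinimalPModel sig (reduct P h) h


/-! ### Classical side: ground disjunctive logic programs with classical aggregates -/

/-- A classical body element: an atom, or a ground classical aggregate atom
`f(T) ≺ w` with `f ∈ {sum, times, min, max, count}`, `T` a finite set of pairs
`⟨t | Conj⟩` (`t` a real constant, `Conj` a finite conjunction of ground atoms),
and `w` a real constant. -/
inductive CBodyElem (Atom : Type) where
  | atom (a : Atom)
  | agg (f : AggF) (T : Finset (ℝ × List Atom)) (op : CmpOp) (w : ℝ)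

/-- A ground DLP^A rule `a₁ ∨ … ∨ a_k ← b_{k+1}, …, b_m, not b_{m+1}, …, not b_n`. -/
structure CRule (Atom : Type) where
  head : List Atom
  pos : List (CBodyElem Atom)
  neg : List (CBodyElem Atom)

/-- A ground DLP^A program. -/
structure CProgram (Atom : Type) where
  rules : Finset (CRule Atom)

/-- `T_I = {{t : ⟨t | Conj⟩ ∈ T and every atom of Conj is in I}}`. -/
def TI (I : Set Atom) (T : Finset (ℝ × List Atom)) : Multiset ℝ :=
  (T.val.filter fun p => ∀ a ∈ p.2, a ∈ I).map Prod.fst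

/-- Classical satisfaction of a body element by an interpretation `I ⊆ B_L`:
`I` satisfies `f(T) ≺ w` iff `f(T_I)` is defined and `f(T_I) ≺ w`. -/
def csatElem (I : Set Atom) : CBodyElem Atom → Prop
  | .atom a => a ∈ I
  | .agg f T op w => ∃ x, f.evalC (TI I T) = some x ∧ op.evalR x w

/-- `I` satisfies the whole body of a classical rule. -/
def csatBody (I : Set Atom) (r : CRule Atom) : Prop :=
  (∀ e ∈ r.pos, csatElem I e) ∧ (∀ e ∈ r.neg, ¬ csatElem I e)

/-- `I` is a model of a classical rule: it satisfies some head atom whenever it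
satisfies the whole body. -/
def cModelsRule (I : Set Atom) (r : CRule Atom) : Prop :=
  csatBody I r → ∃ a ∈ r.head, a ∈ I

/-- `I` is a model of a classical program. -/
def isCModel (P : CProgram Atom) (I : Set Atom) : Prop :=
  ∀ r ∈ P.rules, cModelsRule I r

/-- The (FLP) reduct `{r ∈ Π : I satisfies body(r)}`. -/
def cReduct (P : CProgram Atom) (I : Set Atom) : CProgram Atom :=
  ⟨P.rules.filter fun r => csatBody I r⟩

/-- `I` is a classical (Faber–Leone–Pfeifer) answer set of `Π` iff `I` is a
subset-minimal model of the reduct `{r ∈ Π : I satisfies body(r)}`. -/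
def isCAnswerSet (P : CProgram Atom) (I : Set Atom) : Prop :=
  isCModel (cReduct P I) I ∧ ¬ ∃ J : Set Atom, isCModel (cReduct P I) J ∧ J ⊂ I

/-! ### The DHPP₁^PA translation -/

/-- The probability set `S = {⟨t : [1,1] | Conj:[1,1]⟩ : ⟨t | Conj⟩ ∈ T}` in which
every value and every conjunct is annotated with `[1,1]`. -/
def transSet (Strat : Type) (T : Finset (ℝ × List Atom)) : Finset (PSetElem Atom Strat) :=
  T.image fun p => ⟨p.1, oneI, p.2.map fun a => (HBF.atom a, oneI)⟩

/-- Translation of classical body elements: every atom and every aggregate atom is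
annotated with `[1,1]`, and each classical aggregate atom `f(T) ≺ w` becomes the
probability aggregate atom `f_P(S) ≺ w : [1,1]`. -/
def transElem : CBodyElem Atom → BodyElem Atom Strat × PInterval
  | .atom a => (BodyElem.hbf (HBF.atom a), oneI)
  | .agg f T op w => (BodyElem.pagg f (transSet Strat T) op (w, w), oneI)

/-- Translation of a classical rule, annotating every head atom with `[1,1]`. -/
def transRule (r : CRule Atom) : Rule Atom Strat :=
  ⟨r.head.map fun a => (a, oneI), r.pos.map transElem, r.neg.map transElem⟩

/-- The DHPP₁^PA translation `Π′ = ⟨R, τ⟩` of a classical program `Π`, with `τ` an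
arbitrary assignment of disjunctive p-strategies. -/
def transProgram (P : CProgram Atom) (τ : Atom → Strat) : Program Atom Strat :=
  ⟨P.rules.image transRule, τ⟩

/-- The p-interpretation value of an atom determined by `I ⊆ B_L`:
`[1,1]` if `a ∈ I` and `[0,0]` otherwise. -/
def atomVal (I : Set Atom) (a : Atom) : PInterval :=
  if a ∈ I then oneI else zeroI

/-- The p-interpretation `h_I`: `h_I(a) = [1,1]` if `a ∈ I`, `h_I(a) = [0,0]` if
`a ∈ B_L \ I`, and `h_I(A) = c_ρ{{h_I(a₁),…,h_I(aₙ)}}` for every compound hybrid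
basic formula `A = a₁ *_ρ … *_ρ aₙ`. -/
def hInterp (sig : PSig Strat) (I : Set Atom) : PInterp Atom Strat :=
  fun A =>
    match A with
    | .atom a => atomVal I a
    | .conj ρ l => (sig.str ρ).compM (↑(l.map (atomVal I)))
    | .disj ρ l => (sig.str ρ).compM (↑(l.map (atomVal I)))

/-! ### Auxiliary lemmas -/

section Aux

lemma tle_refl' (x : PInterval) : tle x x := ⟨le_refl _, le_refl _⟩

lemma tle_trans' {x y z : PInterval} (h₁ : tle x y) (h₂ : tle y z) : tle x z :=
  ⟨le_trans h₁.1 h₂.1, le_trans h₁.2 h₂.2⟩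

lemma tle_antisymm' {x y : PInterval} (h₁ : tle x y) (h₂ : tle y x) : x = y :=
  Subtype.ext (Prod.ext (le_antisymm h₁.1 h₂.1) (le_antisymm h₁.2 h₂.2))

lemma tle_zero' (x : PInterval) : tle zeroI x :=
  ⟨by simpa [zeroI] using x.2.1, by simpa [zeroI] using le_trans x.2.1 x.2.2.1⟩

lemma eq_one_of_one_tle {x : PInterval} (h : tle oneI x) : x = oneI := by
  refine Subtype.ext (Prod.ext ?_ ?_)
  · exact le_antisymm (le_trans x.2.2.1 x.2.2.2) h.1
  · exact le_antisymm x.2.2.2 h.2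

lemma eq_zero_of_tle_zero {x : PInterval} (h : tle x zeroI) : x = zeroI := by
  have h1 : x.val.1 ≤ 0 := by simpa [zeroI] using h.1
  have h2 : x.val.2 ≤ 0 := by simpa [zeroI] using h.2
  have e1 : x.val.1 = 0 := le_antisymm h1 x.2.1
  have e2 : x.val.2 = 0 := le_antisymm h2 (le_trans x.2.1 x.2.2.1)
  exact Subtype.ext (Prod.ext (by simp [e1, zeroI]) (by simp [e2, zeroI]))

lemma not_one_tle_zero : ¬ tle oneI zeroI := by
  rintro ⟨h, -⟩
  norm_num [oneI, zeroI] at h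

lemma zeroI_ne_oneI : zeroI ≠ oneI := by
  intro h
  have := congrArg (fun x : PInterval => x.val.1) h
  norm_num [oneI, zeroI] at this

variable {Atom Strat : Type}

/-- The classical interpretation determined by a p-interpretation. -/
def Jof (h : PInterp Atom Strat) : Set Atom := {a | tle oneI (h (HBF.atom a))}

lemma one_tle_atomVal {I : Set Atom} {a : Atom} : tle oneI (atomVal I a) ↔ a ∈ I := by
  by_cases h : a ∈ I
  · simp only [atomVal, if_pos h]
    exact iff_of_true (tle_refl' _) h
  · simp only [atomVal, if_neg h]
    exact iff_of_false not_one_tle_zero h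

lemma Jof_hInterp (sig : PSig Strat) (I : Set Atom) : Jof (hInterp sig I) = I := by
  ext a
  simp [Jof, hInterp, one_tle_atomVal]

lemma satC_trans (h : PInterp Atom Strat) (l : List Atom) :
    satC h (l.map fun a => (HBF.atom a, oneI)) ↔ ∀ a ∈ l, a ∈ Jof h := by
  simp [satC, Jof]

/-- The element translation used in `transSet`. -/
def trElt (p : ℝ × List Atom) : PSetElem Atom Strat :=
  ⟨p.1, oneI, p.2.map fun a => (HBF.atom a, oneI)⟩

lemma trElt_injective : Function.Injective (trElt (Atom := Atom) (Strat := Strat)) := by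
  rintro ⟨t₁, l₁⟩ ⟨t₂, l₂⟩ h
  simp only [trElt, PSetElem.mk.injEq] at h
  refine Prod.ext h.1 ?_
  have := h.2.2
  have hinj : Function.Injective (fun a : Atom => ((HBF.atom a : HBF Atom Strat), oneI)) := by
    intro a b hab
    simpa using hab
  exact List.map_injective_iff.mpr hinj this

lemma transSet_val (T : Finset (ℝ × List Atom)) :
    (transSet Strat (Atom := Atom) T).val = T.val.map trElt := by
  unfold transSet
  rw [Finset.image_val, Multiset.dedup_eq_self.mpr]
  · rfl
  · exact Multiset.Nodup.map trElt_injective T.nodup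

lemma groundSet_trans (h : PInterp Atom Strat) (T : Finset (ℝ × List Atom)) :
    groundSet h (transSet Strat T) = (TI (Jof h) T).map (fun t => (t, oneI)) := by
  unfold groundSet TI
  rw [transSet_val]
  induction T.val using Multiset.induction with
  | empty => simp
  | cons p s ih =>
      by_cases hc : ∀ a ∈ p.2, a ∈ Jof h
      · rw [Multiset.map_cons, Multiset.filter_cons_of_pos, Multiset.filter_cons_of_pos,
          Multiset.map_cons, Multiset.map_cons, Multiset.map_cons, ih]
        · rfl
        · exact hc
        · exact (satC_trans h p.2).mpr hc
      · rw [Multiset.map_cons, Multiset.filter_cons_of_neg, Multiset.filter_cons_of_neg, ih]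
        · exact hc
        · exact fun hs => hc ((satC_trans h p.2).mp hs)

lemma aggX_ones (s : Multiset ℝ) :
    aggX (s.map fun t => (t, oneI)) = ((1 : ℝ), (1 : ℝ)) := by
  unfold aggX
  rw [Multiset.map_map, Multiset.map_map]
  refine Prod.ext ?_ ?_ <;>
    · simp only [Function.comp]
      rw [Multiset.prod_eq_one]
      intro x hx
      rw [Multiset.mem_map] at hx
      obtain ⟨t, -, rfl⟩ := hx
      rfl

lemma map_fst_ones (s : Multiset ℝ) :
    ((s.map fun t => (t, oneI)).map (Prod.fst : ℝ × PInterval → ℝ)) = s := by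
  rw [Multiset.map_map]
  simp [Function.comp]

lemma evalP_trans (f : AggF) (h : PInterp Atom Strat) (T : Finset (ℝ × List Atom)) :
    f.evalP (groundSet h (transSet Strat T)) =
      (f.evalC (TI (Jof h) T)).map (fun x => (x, ((1 : ℝ), (1 : ℝ)))) := by
  rw [groundSet_trans]
  unfold AggF.evalP
  rw [map_fst_ones, aggX_ones]

lemma tleP_one_one : tleP oneI.val ((1 : ℝ), (1 : ℝ)) := ⟨le_refl _, le_refl _⟩

lemma satPos_trans (h : PInterp Atom Strat) (b : CBodyElem Atom) :
    satPos h (transElem (Strat := Strat) b) ↔ csatElem (Jof h) b := by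
  cases b with
  | atom a => simp [transElem, satPos, csatElem, Jof]
  | agg f T op w =>
      simp only [transElem, satPos, csatElem, evalP_trans]
      cases hE : f.evalC (TI (Jof h) T) with
      | none => simp
      | some x =>
          simp only [Option.map_some, Option.some.injEq]
          constructor
          · rintro ⟨x', ν, hx, hop, -⟩
            exact ⟨x', by simp [Prod.ext_iff] at hx; exact hx.1 ▸ rfl, hop.1⟩
          · rintro ⟨x', hx', hop⟩
            obtain rfl : x = x' := by simpa using hx'
            exact ⟨x, ((1 : ℝ), (1 : ℝ)), rfl, ⟨hop, hop⟩, tleP_one_one⟩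

lemma satNeg_trans (h : PInterp Atom Strat) (b : CBodyElem Atom) :
    satNeg h (transElem (Strat := Strat) b) ↔ ¬ csatElem (Jof h) b := by
  cases b with
  | atom a => simp [transElem, satNeg, csatElem, Jof]
  | agg f T op w =>
      simp only [transElem, satNeg, csatElem, evalP_trans]
      cases hE : f.evalC (TI (Jof h) T) with
      | none => simp
      | some x =>
          simp only [Option.map_some, Option.some.injEq, reduceCtorEq, false_or]
          constructor
          · rintro ⟨x', ν, hx, hbad⟩
            obtain ⟨rfl, rfl⟩ : x = x' ∧ ((1 : ℝ), (1 : ℝ)) = ν := by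
              simpa [Prod.ext_iff] using hx
            rintro ⟨x'', hx'', hop⟩
            obtain rfl : x = x'' := by simpa using hx''
            rcases hbad with hbad | hbad
            · exact hbad ⟨hop, hop⟩
            · exact hbad tleP_one_one
          · intro hbad
            refine ⟨x, ((1 : ℝ), (1 : ℝ)), rfl, Or.inl ?_⟩
            rintro ⟨hop, -⟩
            exact hbad ⟨x, rfl, hop⟩

lemma satBody_trans (h : PInterp Atom Strat) (r : CRule Atom) :
    satBody h (transRule (Strat := Strat) r) ↔ csatBody (Jof h) r := by
  unfold satBody transRule csatBody
  simp only [List.mem_map, forall_exists_index, and_imp]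
  constructor
  · rintro ⟨hp, hn⟩
    constructor
    · exact fun e he => (satPos_trans h e).mp (hp _ e he rfl)
    · exact fun e he => (satNeg_trans h e).mp (hn _ e he rfl)
  · rintro ⟨hp, hn⟩
    constructor
    · rintro _ e he rfl
      exact (satPos_trans h e).mpr (hp e he)
    · rintro _ e he rfl
      exact (satNeg_trans h e).mpr (hn e he)

lemma satHead_trans (h : PInterp Atom Strat) (r : CRule Atom) :
    satHead h (transRule (Strat := Strat) r) ↔ ∃ a ∈ r.head, a ∈ Jof h := by
  simp [satHead, transRule, Jof]

lemma compM_list_mono (ρ : PStrategy) : ∀ {l₁ l₂ : List PInterval},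
    List.Forall₂ tle l₁ l₂ → tle (ρ.compM ↑l₁) (ρ.compM ↑l₂) := by
  intro l₁ l₂ h
  induction h with
  | nil => exact tle_refl' _
  | @cons a b l₁ l₂ hab htl ih =>
      cases l₁ with
      | nil =>
          cases htl
          show tle (ρ.compM {a}) (ρ.compM {b})
          rw [ρ.compM_singleton, ρ.compM_singleton]
          exact hab
      | cons c l =>
          have h₂ : l₂ ≠ [] := by
            rintro rfl
            cases htl
          show tle (ρ.compM (a ::ₘ ↑(c :: l))) (ρ.compM (b ::ₘ ↑l₂))
          rw [ρ.compM_cons _ _ (by simp), ρ.compM_cons _ _ (by simpa using h₂)]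
          exact ρ.comp_mono _ _ _ _ hab ih

lemma forall₂_map_tle {f g : Atom → PInterval} (hfg : ∀ a, tle (f a) (g a)) :
    ∀ l : List Atom, List.Forall₂ tle (l.map f) (l.map g) := by
  intro l
  induction l with
  | nil => simp
  | cons a l ih => exact List.Forall₂.cons (hfg a) ih

lemma hInterp_mono (sig : PSig Strat) {J I : Set Atom} (hJI : J ⊆ I) :
    interpLE (hInterp sig J) (hInterp sig I) := by
  have hatom : ∀ a, tle (atomVal J a) (atomVal I a) := by
    intro a
    by_cases haJ : a ∈ J
    · simp only [atomVal, if_pos haJ, if_pos (hJI haJ)]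
      exact tle_refl' _
    · simp only [atomVal, if_neg haJ]
      exact tle_zero' _
  intro A
  cases A with
  | atom a => exact hatom a
  | conj ρ l => exact compM_list_mono _ (forall₂_map_tle hatom l)
  | disj ρ l => exact compM_list_mono _ (forall₂_map_tle hatom l)

lemma mem_headAnns {h : PInterp Atom Strat} {R : Finset (Rule Atom Strat)} {a : Atom}
    {μ : PInterval} (hμ : μ ∈ headAnns h R a) :
    (∃ r ∈ R, ∃ p ∈ r.head, p.2 = μ) ∧ tle μ (h (HBF.atom a)) := by
  unfold headAnns at hμ
  rw [Multiset.mem_bind] at hμ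
  obtain ⟨r, hr, hμ⟩ := hμ
  split at hμ
  · rw [Multiset.mem_map] at hμ
    obtain ⟨p, hp, rfl⟩ := hμ
    rw [Multiset.mem_filter] at hp
    exact ⟨⟨r, hr, p, by simpa using hp.1, rfl⟩, hp.2.2⟩
  · simp at hμ

/-- Condition (i) of p-models holds for any `h` over a set of rules whose heads are
all annotated with `[1,1]`, given a disjunctive strategy. -/
lemma condI {sig : PSig Strat} {τ : Atom → Strat} (hτ : ∀ a : Atom, sig.IsDisj (τ a))
    (hone : ∀ (ρ : Strat) (s : Multiset PInterval),
      s ≠ 0 → (∀ x ∈ s, x = oneI) → (sig.str ρ).compM s = oneI)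
    (h : PInterp Atom Strat) (R : Finset (Rule Atom Strat))
    (hR : ∀ r ∈ R, ∀ p ∈ r.head, p.2 = oneI) (a : Atom) :
    tle ((sig.str (τ a)).compM (headAnns h R a)) (h (HBF.atom a)) := by
  by_cases hz : headAnns h R a = 0
  · rw [hz, sig.disj_empty _ (hτ a)]
    exact tle_zero' _
  · have hall : ∀ μ ∈ headAnns h R a, μ = oneI := by
      intro μ hμ
      obtain ⟨⟨r, hr, p, hp, rfl⟩, -⟩ := mem_headAnns hμ
      exact hR r hr p hp
    rw [hone _ _ hz hall]
    obtain ⟨μ, hμ⟩ := Multiset.exists_mem_of_ne_zero hz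
    have := (mem_headAnns hμ).2
    rwa [hall μ hμ] at this

lemma mem_reduct_trans {P : CProgram Atom} {τ : Atom → Strat} {h : PInterp Atom Strat}
    {r' : Rule Atom Strat} :
    r' ∈ (reduct (transProgram P τ) h).R ↔
      (∃ r ∈ P.rules, transRule r = r') ∧ satBody h r' := by
  simp [reduct, transProgram, Finset.mem_filter, Finset.mem_image]

lemma reduct_heads_one {P : CProgram Atom} {τ : Atom → Strat} {h : PInterp Atom Strat} :
    ∀ r' ∈ (reduct (transProgram P τ) h).R, ∀ p ∈ r'.head, p.2 = oneI := by
  intro r' hr' p hp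
  obtain ⟨⟨r, -, rfl⟩, -⟩ := mem_reduct_trans.mp hr'
  simp only [transRule, List.mem_map] at hp
  obtain ⟨a, -, rfl⟩ := hp
  rfl

end Aux

/-- Let `Π` be a ground DLP^A program and `Π′ = ⟨R, τ⟩` its
DHPP₁^PA translation, with `τ` an arbitrary assignment of disjunctive p-strategies,
and assume every `c_ρ` composes any (nonempty) multiset of copies of `[1,1]` to
`[1,1]`.  Then `h_I` is a probability answer set of `Π′` iff `I` is a classical
(Faber–Leone–Pfeifer) answer set of `Π`. -/
theorem dlpA_subsumption {Atom Strat : Type} (sig : PSig Strat)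
    (P : CProgram Atom) (τ : Atom → Strat) (hτ : ∀ a : Atom, sig.IsDisj (τ a))
    (hone : ∀ (ρ : Strat) (s : Multiset PInterval),
      s ≠ 0 → (∀ x ∈ s, x = oneI) → (sig.str ρ).compM s = oneI)
    (I : Set Atom) :
    isAnswerSet sig (transProgram P τ) (hInterp sig I) ↔ isCAnswerSet P I := by
  have hJI₀ : Jof (hInterp sig I) = I := Jof_hInterp sig I
  constructor
  · rintro ⟨hmod, hmin⟩
    constructor
    · -- I is a model of the classical reduct
      intro r hr hbody
      rw [cReduct, Finset.mem_filter] at hr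
      obtain ⟨hrP, hbI⟩ := hr
      have hsatB : satBody (hInterp sig I) (transRule r) := by
        rw [satBody_trans, hJI₀]
        exact hbI
      have hrmem : transRule r ∈ (reduct (transProgram P τ) (hInterp sig I)).R :=
        mem_reduct_trans.mpr ⟨⟨r, hrP, rfl⟩, hsatB⟩
      have hh := hmod.1 _ hrmem hsatB
      rw [satHead_trans, hJI₀] at hh
      exact hh
    · -- minimality
      rintro ⟨J, hJmod, hJI⟩
      refine hmin (hInterp sig J) ?_ ?_
      · refine ⟨?_, ?_, fun ρ l => ⟨tle_refl' _, tle_refl' _⟩⟩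
        · intro r' hr'
          obtain ⟨⟨r, hrP, rfl⟩, hbI⟩ := mem_reduct_trans.mp hr'
          intro hbJ
          rw [satBody_trans, Jof_hInterp] at hbJ hbI
          have hrred : r ∈ (cReduct P I).rules := by
            rw [cReduct, Finset.mem_filter]
            exact ⟨hrP, hbI⟩
          have := hJmod r hrred hbJ
          rw [satHead_trans, Jof_hInterp]
          exact this
        · exact condI hτ hone _ _ reduct_heads_one
      · refine ⟨hInterp_mono sig hJI.subset, ?_⟩
        obtain ⟨a, haI, haJ⟩ := Set.exists_of_ssubset hJI
        intro heq
        have := congrFun heq (HBF.atom a)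
        simp only [hInterp, atomVal, if_pos haI, if_neg haJ] at this
        exact zeroI_ne_oneI this
  · rintro ⟨hImod, hImin⟩
    constructor
    · refine ⟨?_, ?_, fun ρ l => ⟨tle_refl' _, tle_refl' _⟩⟩
      · intro r' hr'
        obtain ⟨⟨r, hrP, rfl⟩, hb⟩ := mem_reduct_trans.mp hr'
        intro _
        rw [satBody_trans, hJI₀] at hb
        have hrred : r ∈ (cReduct P I).rules := by
          rw [cReduct, Finset.mem_filter]
          exact ⟨hrP, hb⟩
        have := hImod r hrred hb
        rw [satHead_trans, hJI₀]
        exact this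
      · exact condI hτ hone _ _ reduct_heads_one
    · intro h' hp' hlt
      set J := Jof h' with hJdef
      have hJsubI : J ⊆ I := by
        intro a ha
        by_contra haI
        have h1 := hlt.1 (HBF.atom a)
        simp only [hInterp, atomVal, if_neg haI] at h1
        exact not_one_tle_zero (tle_trans' ha h1)
      have hJmod : isCModel (cReduct P I) J := by
        intro r hr hbJ
        rw [cReduct, Finset.mem_filter] at hr
        obtain ⟨hrP, hbI⟩ := hr
        have hrmem : transRule r ∈ (reduct (transProgram P τ) (hInterp sig I)).R := by
          refine mem_reduct_trans.mpr ⟨⟨r, hrP, rfl⟩, ?_⟩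
          rw [satBody_trans, hJI₀]
          exact hbI
        have hh := hp'.1 _ hrmem ((satBody_trans h' r).mpr hbJ)
        rw [satHead_trans] at hh
        exact hh
      have hJeq : J = I := by
        by_contra hne
        exact hImin ⟨J, hJmod, HasSubset.Subset.ssubset_of_ne hJsubI hne⟩
      apply hlt.2
      have hatom : ∀ a, h' (HBF.atom a) = atomVal I a := by
        intro a
        by_cases haI : a ∈ I
        · have haJ : a ∈ J := hJeq ▸ haI
          simp only [atomVal, if_pos haI]
          exact eq_one_of_one_tle haJ
        · have h1 := hlt.1 (HBF.atom a)
          simp only [hInterp, atomVal, if_neg haI] at h1 ⊢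
          exact eq_zero_of_tle_zero h1
      funext A
      cases A with
      | atom a => exact hatom a
      | conj ρ l =>
          have hmapeq : l.map (fun a => h' (HBF.atom a)) = l.map (atomVal I) :=
            List.map_congr_left fun a _ => hatom a
          have h1 := (hp'.2.2 ρ l).1
          rw [hmapeq] at h1
          exact tle_antisymm' (hlt.1 (HBF.conj ρ l)) h1
      | disj ρ l =>
          have hmapeq : l.map (fun a => h' (HBF.atom a)) = l.map (atomVal I) :=
            List.map_congr_left fun a _ => hatom a
          have h1 := (hp'.2.2 ρ l).2
          rw [hmapeq] at h1
          exact tle_antisymm' (hlt.1 (HBF.disj ρ l)) h1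

end
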